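/- arXiv:1209.6270 — 4 statements merged into one kernel-verified Lean document; each statement's English description precedes it below -/
import Mathlib

section
/- For any n ≥ 3, the sum over pairs of positive integers (i,j) with i + j = n of A(i+1, i−2)·A(j+1, j−3) equals ((n−3)(n−4)/(2n))·C_{n−2}. -/
def A (n k : ℤ) : ℕ :=
  if n = 2 ∧ k = 0 then 1
  else if 3 ≤ n ∧ 0 ≤ k ∧ k ≤ n - 3 then
    Nat.choose (n + k - 1).toNat k.toNat * Nat.choose (n - 3).toNat k.toNat / (k.toNat + 1)
  else 0

/-!
Put `a = i - 1`, `b = j - 1` and `m = n - 2`. For `a, b ≥ 1` the summand is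
`C_a · (b - 1)/2 · C_b`, and the terms with `a = 0` or `b = 0` vanish. Over the whole
antidiagonal `a + b = m` the symmetry `a ↔ b` and Segner's recurrence give
`∑ b C_a C_b = (m/2) C_{m+1}`, hence `∑ C_a C_b (b - 1)/2 = (m - 2)/4 · C_{m+1}`; removing the
two end terms and using `(m + 2) C_{m+1} = 2(2m + 1) C_m` leaves
`(m - 1)(m - 2)/(2(m + 2)) · C_m`.
-/

open Finset Nat

theorem choose_two_mul_succ_eq_succ_mul_catalan_succ (p : ℕ) :
    (2 * (p + 1)).choose p = (p + 1) * catalan (p + 1) := by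
  apply Nat.eq_of_mul_eq_mul_right (show 0 < p + 2 by omega)
  have h := choose_succ_right_eq (2 * (p + 1)) p
  rw [show 2 * (p + 1) - p = p + 2 by omega] at h
  rw [← h, ← centralBinom_eq_two_mul_choose, ← succ_mul_catalan_eq_centralBinom]
  ring

theorem two_mul_choose_two_mul_add_three_eq (r : ℕ) :
    2 * (2 * r + 3).choose r = (r + 1) * catalan (r + 2) := by
  have h_mid : 2 * (2 * r + 3).choose (r + 1) = (r + 3) * catalan (r + 2) := by
    apply Nat.eq_of_mul_eq_mul_right (show 0 < r + 2 by omega)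
    have h := choose_mul_succ_eq (2 * r + 3) (r + 2)
    have h_symm : (2 * r + 3).choose (r + 2) = (2 * r + 3).choose (r + 1) :=
      choose_symm_half (r + 1)
    rw [show 2 * r + 3 + 1 - (r + 2) = r + 2 by omega, h_symm] at h
    rw [succ_mul_catalan_eq_centralBinom, centralBinom_eq_two_mul_choose,
      show 2 * (r + 2) = 2 * r + 3 + 1 by ring]
    linarith
  apply Nat.eq_of_mul_eq_mul_right (show 0 < r + 3 by omega)
  have h := choose_succ_right_eq (2 * r + 3) r
  rw [show 2 * r + 3 - r = r + 3 by omega] at h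
  calc 2 * (2 * r + 3).choose r * (r + 3) = 2 * (2 * r + 3).choose (r + 1) * (r + 1) := by
        rw [mul_assoc, ← h, mul_assoc]
    _ = (r + 1) * catalan (r + 2) * (r + 3) := by rw [h_mid]; ring

theorem succ_succ_mul_catalan_succ (m : ℕ) :
    (m + 2) * catalan (m + 1) = 2 * (2 * m + 1) * catalan m := by
  apply Nat.eq_of_mul_eq_mul_left (show 0 < m + 1 by omega)
  calc (m + 1) * ((m + 2) * catalan (m + 1)) = (m + 1) * centralBinom (m + 1) := by
        rw [← succ_mul_catalan_eq_centralBinom]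
    _ = 2 * (2 * m + 1) * centralBinom m := succ_mul_centralBinom_succ m
    _ = (m + 1) * (2 * (2 * m + 1) * catalan m) := by
        rw [← succ_mul_catalan_eq_centralBinom]; ring

theorem two_mul_sum_antidiagonal_snd_mul_catalan_mul_catalan (m : ℕ) :
    2 * ∑ ij ∈ antidiagonal m, ij.2 * (catalan ij.1 * catalan ij.2) = m * catalan (m + 1) := by
  have h_swap : ∑ ij ∈ antidiagonal m, ij.2 * (catalan ij.1 * catalan ij.2) =
      ∑ ij ∈ antidiagonal m, ij.1 * (catalan ij.1 * catalan ij.2) := by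
    rw [← Finset.Nat.sum_antidiagonal_swap]
    exact sum_congr rfl fun ij _ => by simp only [Prod.fst_swap, Prod.snd_swap]; ring
  calc 2 * ∑ ij ∈ antidiagonal m, ij.2 * (catalan ij.1 * catalan ij.2)
      = ∑ ij ∈ antidiagonal m, (ij.1 + ij.2) * (catalan ij.1 * catalan ij.2) := by
        rw [two_mul]
        nth_rw 1 [h_swap]
        rw [← sum_add_distrib]
        simp only [add_mul]
    _ = ∑ ij ∈ antidiagonal m, m * (catalan ij.1 * catalan ij.2) :=
        sum_congr rfl fun ij hij => by rw [mem_antidiagonal.mp hij]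
    _ = m * catalan (m + 1) := by rw [← mul_sum, catalan_succ']

theorem sum_range_catalan_mul_sub_one_mul_catalan (m : ℕ) :
    ∑ a ∈ range (m + 1),
        (catalan a : ℚ) * ((((m - a : ℕ) : ℚ) - 1) / 2 * catalan (m - a)) =
      ((m : ℚ) - 2) / 4 * catalan (m + 1) := by
  have h_weighted : (2 * ∑ ij ∈ antidiagonal m, (ij.2 : ℚ) * (catalan ij.1 * catalan ij.2)) =
      m * catalan (m + 1) := by
    exact_mod_cast two_mul_sum_antidiagonal_snd_mul_catalan_mul_catalan m
  have h_plain :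
      (∑ ij ∈ antidiagonal m, (catalan ij.1 * catalan ij.2 : ℚ)) = catalan (m + 1) := by
    exact_mod_cast (catalan_succ' m).symm
  rw [← Nat.sum_antidiagonal_eq_sum_range_succ
    (fun a b => (catalan a : ℚ) * (((b : ℚ) - 1) / 2 * catalan b)) m]
  have h_split : ∀ ij ∈ antidiagonal m,
      (catalan ij.1 : ℚ) * (((ij.2 : ℚ) - 1) / 2 * catalan ij.2) =
      ((ij.2 : ℚ) * (catalan ij.1 * catalan ij.2) - catalan ij.1 * catalan ij.2) / 2 :=
    fun _ _ => by ring
  rw [sum_congr rfl h_split, ← sum_div, sum_sub_distrib]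
  linarith

theorem sum_range_add_two {M : Type*} [AddCommMonoid M] (f : ℕ → M) (k : ℕ) :
    ∑ a ∈ range (k + 2), f a = f 0 + ∑ a ∈ range k, f (a + 1) + f (k + 1) := by
  rw [sum_range_succ, sum_range_succ', add_comm (∑ a ∈ range k, f (a + 1))]

theorem sum_Ioo_zero_eq_sum_range {M : Type*} [AddCommMonoid M] (g : ℤ → M) (N : ℕ) :
    ∑ i ∈ Ioo (0 : ℤ) N, g i = ∑ a ∈ range (N - 1), g ((a + 1 : ℕ) : ℤ) := by
  refine sum_nbij' (fun i => (i - 1).toNat) (fun a => ((a + 1 : ℕ) : ℤ)) ?_ ?_ ?_ ?_ ?_ <;>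
    intros <;> simp_all <;> omega

theorem A_eq_zero_of_neg {n k : ℤ} (hk : k < 0) : A n k = 0 := by
  simp only [A]
  split_ifs <;> omega

theorem A_natCast_of_add_three_le {n k : ℕ} (h : k + 3 ≤ n) :
    A n k = (n + k - 1).choose k * (n - 3).choose k / (k + 1) := by
  rw [A, if_neg (by omega), if_pos (by omega)]
  congr <;> omega

theorem A_triangulation (i : ℕ) (hi : 2 ≤ i) :
    A ((i : ℤ) + 1) ((i : ℤ) - 2) = catalan (i - 1) := by
  obtain ⟨p, rfl⟩ : ∃ p, i = p + 2 := ⟨i - 2, by omega⟩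
  rw [show ((p + 2 : ℕ) : ℤ) + 1 = ((p + 3 : ℕ) : ℤ) by push_cast; ring,
    show ((p + 2 : ℕ) : ℤ) - 2 = (p : ℤ) by push_cast; ring,
    A_natCast_of_add_three_le (by omega),
    show p + 3 + p - 1 = 2 * (p + 1) by omega, Nat.add_sub_cancel, choose_self, mul_one,
    choose_two_mul_succ_eq_succ_mul_catalan_succ]
  exact Nat.mul_div_cancel_left _ (by omega)

theorem A_almost_triangulation (j : ℕ) (hj : 2 ≤ j) :
    (A ((j : ℤ) + 1) ((j : ℤ) - 3) : ℚ) = ((j : ℚ) - 2) / 2 * catalan (j - 1) := by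
  obtain rfl | rfl | hj : j = 2 ∨ j = 3 ∨ 4 ≤ j := by omega
  · norm_num [A]
  · norm_num [A, catalan_two]
  obtain ⟨r, rfl⟩ := Nat.exists_eq_add_of_le' hj
  rw [show ((r + 4 : ℕ) : ℤ) + 1 = ((r + 5 : ℕ) : ℤ) by push_cast; ring,
    show ((r + 4 : ℕ) : ℤ) - 3 = ((r + 1 : ℕ) : ℤ) by push_cast; ring,
    A_natCast_of_add_three_le (by omega),
    show r + 5 + (r + 1) - 1 = 2 * (r + 1) + 3 by omega, show r + 5 - 3 = (r + 1) + 1 by omega,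
    choose_succ_self_right, Nat.mul_div_cancel _ (by omega)]
  have h : (2 * ((2 * (r + 1) + 3).choose (r + 1)) : ℚ) = (r + 1 + 1) * catalan (r + 1 + 2) := by
    exact_mod_cast two_mul_choose_two_mul_add_three_eq (r + 1)
  rw [show r + 4 - 1 = r + 1 + 2 by omega]
  push_cast
  linarith

theorem sum_A_triangulation_mul_A_almost (k : ℕ) :
    ((∑ i ∈ Ioo (0 : ℤ) ((k + 3 : ℕ) : ℤ),
        A (i + 1) (i - 2) * A ((k + 3 : ℕ) - i + 1) ((k + 3 : ℕ) - i - 3) : ℕ) : ℚ) =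
      ((k : ℚ) - 1) / 4 * catalan (k + 2) - ((k : ℚ) - 1) / 2 * catalan (k + 1) := by
  have h_total := sum_range_catalan_mul_sub_one_mul_catalan (k + 1)
  rw [sum_range_add_two] at h_total
  simp only [Nat.add_sub_add_right, Nat.sub_zero, Nat.sub_self, catalan_zero] at h_total
  have h_first : A (((0 + 1 : ℕ) : ℤ) + 1) (((0 + 1 : ℕ) : ℤ) - 2) = 0 :=
    A_eq_zero_of_neg (by omega)
  have h_last : A (((k + 3 : ℕ) : ℤ) - ((k + 1 + 1 : ℕ) : ℤ) + 1)
      (((k + 3 : ℕ) : ℤ) - ((k + 1 + 1 : ℕ) : ℤ) - 3) = 0 :=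
    A_eq_zero_of_neg (by omega)
  have h_interior : ∀ a ∈ range k,
      ((A (((a + 1 + 1 : ℕ) : ℤ) + 1) (((a + 1 + 1 : ℕ) : ℤ) - 2) *
        A (((k + 3 : ℕ) : ℤ) - ((a + 1 + 1 : ℕ) : ℤ) + 1)
          (((k + 3 : ℕ) : ℤ) - ((a + 1 + 1 : ℕ) : ℤ) - 3) : ℕ) : ℚ) =
        catalan (a + 1) * ((((k - a : ℕ) : ℚ) - 1) / 2 * catalan (k - a)) := by
    intro a ha
    have hak : a < k := mem_range.mp ha
    rw [show ((k + 3 : ℕ) : ℤ) - ((a + 1 + 1 : ℕ) : ℤ) = ((k + 1 - a : ℕ) : ℤ) by omega,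
      Nat.cast_mul,
      A_triangulation _ (by omega), A_almost_triangulation _ (by omega),
      show k + 1 - a - 1 = k - a by omega, show k + 1 - a = (k - a) + 1 by omega]
    push_cast
    ring
  rw [Nat.cast_sum, sum_Ioo_zero_eq_sum_range, show k + 3 - 1 = k + 2 by rfl, sum_range_add_two,
    h_first, h_last, sum_congr rfl h_interior]
  push_cast at h_total ⊢
  linarith

/-- For `n ≥ 3`,
`∑_{i+j=n, i,j≥1} A(i+1, i-2)·A(j+1, j-3) = ((n-3)(n-4)/(2n))·C_{n-2}`. -/
theorem convolution_triangulation_almost (n : ℤ) (hn : 3 ≤ n) :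
    ((∑ i ∈ Finset.Ioo (0 : ℤ) n, A (i + 1) (i - 2) * A (n - i + 1) (n - i - 3) : ℕ) : ℚ) =
      ((n : ℚ) - 3) * ((n : ℚ) - 4) / (2 * (n : ℚ)) * (catalan (n - 2).toNat : ℚ) := by
  lift n to ℕ using (by omega)
  obtain ⟨k, rfl⟩ : ∃ k, n = k + 3 := ⟨n - 3, by omega⟩
  have h_rec : ((k : ℚ) + 3) * catalan (k + 2) = 2 * (2 * k + 3) * catalan (k + 1) := by
    exact_mod_cast succ_succ_mul_catalan_succ (k + 1)
  rw [sum_A_triangulation_mul_A_almost, show (((k + 3 : ℕ) : ℤ) - 2).toNat = k + 1 by omega]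
  push_cast
  field_simp
  linear_combination 2 * (k - 1) * h_rec
end

section
/- Catalan's k-fold convolution formula: for m ≥ 1 even and n ≥ 0, the sum over all m-tuples (i_1,…,i_m) of nonnegative integers with i_1+⋯+i_m = n of C_{i_1}⋯C_{i_m} equals [m·(n+1)(n+2)⋯(n+m/2−1)] / [2·(n+m/2+2)(n+m/2+3)⋯(n+m)] · C_{n+m/2}. -/
/-!
The convolution is the coefficient `[xⁿ] C(x)ᵐ` of the `m`-th power of the Catalan generating
function. The functional equation `C = 1 + x C²` gives `Cᵐ⁺² = Cᵐ⁺¹ + x Cᵐ⁺³`, i.e. a Pascal-type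
recurrence for these coefficients, which the ballot numbers `(m+1)/(n+m+1) · binom(2n+m, n)` also
satisfy; a double induction identifies the two. For `m` even, the ballot number is rewritten with
factorials into the stated product form.
-/

open Finset PowerSeries Nat

theorem prod_Icc_natCast_add_eq_factorial_div {K : Type*} [Field K] [CharZero K] (x : ℕ)
    {a b : ℕ} (hab : a ≤ b) : ∏ t ∈ Icc (a + 1) b, ((x : K) + t) = (x + b)! / (x + a)! := by
  induction b, hab using Nat.le_induction with
  | base => simp [factorial_ne_zero]
  | succ b hab ih =>
    rw [prod_Icc_succ_top (by omega), ih, ← add_assoc, factorial_succ]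
    push_cast
    ring

theorem cast_catalan_eq_choose_div {K : Type*} [Field K] [CharZero K] (n : ℕ) :
    (catalan n : K) = (2 * n).choose n / (n + 1) := by
  have h := congrArg (Nat.cast (R := K)) (succ_mul_catalan_eq_centralBinom n)
  rw [centralBinom_eq_two_mul_choose] at h
  push_cast at h
  rw [← h]
  field_simp

namespace PowerSeries

theorem coeff_pow_eq_sum_antidiagonalTuple {R : Type*} [CommSemiring R] (p : R⟦X⟧) (m n : ℕ) :
    coeff n (p ^ m) = ∑ f ∈ Finset.Nat.antidiagonalTuple m n, ∏ i, coeff (f i) p := by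
  rw [← piAntidiag_univ_fin_eq_antidiagonalTuple, ← Fin.prod_const, coeff_prod, finsuppAntidiag,
    sum_map, ← sum_attach (piAntidiag _ _)]
  rfl

theorem catalanSeries_pow_add_two (m : ℕ) :
    catalanSeries ^ (m + 2) = catalanSeries ^ (m + 1) + X * catalanSeries ^ (m + 3) :=
  calc catalanSeries ^ (m + 2) = catalanSeries ^ (m + 1) * (catalanSeries ^ 2 * X + 1) := by
        rw [catalanSeries_sq_mul_X_add_one, pow_succ]
    _ = _ := by ring

theorem cast_coeff_catalanSeries_pow_succ (m n : ℕ) :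
    ((coeff n (catalanSeries ^ (m + 1)) : ℕ) : ℚ) =
      (m + 1) / (n + m + 1) * (2 * n + m).choose n := by
  induction n generalizing m with
  | zero => simp [Nat.cast_add_one_ne_zero]
  | succ n ihn =>
    induction m with
    | zero =>
      rw [zero_add, pow_one, catalanSeries_coeff, cast_catalan_eq_choose_div]
      simp only [Nat.cast_zero, add_zero, zero_add, one_div_mul_eq_div]
    | succ m ihm =>
      have hratio : ((2 * n + m + 2).choose (n + 1) : ℚ) * (n + 1) =
          (2 * n + m + 2).choose n * (n + m + 2) := by
        have h := choose_succ_right_eq (2 * n + m + 2) n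
        rw [show 2 * n + m + 2 - n = n + m + 2 by omega] at h
        exact_mod_cast h
      rw [catalanSeries_pow_add_two, map_add, coeff_succ_X_mul, Nat.cast_add, ihm, ihn,
        show 2 * (n + 1) + (m + 1) = 2 * n + m + 2 + 1 by ring, choose_succ_succ',
        show 2 * (n + 1) + m = 2 * n + m + 2 by ring, show 2 * n + (m + 2) = 2 * n + m + 2 by ring]
      push_cast
      field_simp
      linear_combination -(n + m + 3) * hratio

end PowerSeries

theorem cast_sum_antidiagonalTuple_prod_catalan (m n : ℕ) :
    ∑ f ∈ Finset.Nat.antidiagonalTuple (m + 1) n, ∏ i, (catalan (f i) : ℚ) =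
      (m + 1) / (n + m + 1) * (2 * n + m).choose n := by
  rw [← cast_coeff_catalanSeries_pow_succ, coeff_pow_eq_sum_antidiagonalTuple]
  simp

/-- Catalan's `k`-fold convolution formula, even case: for `m ≥ 1` even and `n ≥ 0`,
`∑_{i₁+⋯+i_m = n} C_{i₁}⋯C_{i_m}
  = [m·(n+1)⋯(n+m/2-1)] / [2·(n+m/2+2)⋯(n+m)] · C_{n+m/2}`. -/
theorem catalan_convolution_even (m n : ℕ) (hm : 1 ≤ m) (hme : Even m) :
    (∑ f ∈ Finset.Nat.antidiagonalTuple m n, ∏ i, (catalan (f i) : ℚ)) =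
      (m * ∏ t ∈ Finset.Icc 1 (m / 2 - 1), ((n : ℚ) + t)) /
          (2 * ∏ t ∈ Finset.Icc (m / 2 + 2) m, ((n : ℚ) + t)) *
        (catalan (n + m / 2) : ℚ) := by
  obtain ⟨k, rfl⟩ : ∃ k, m = 2 * k + 1 + 1 := by
    obtain ⟨c, rfl⟩ := hme
    exact ⟨c - 1, by omega⟩
  rw [cast_sum_antidiagonalTuple_prod_catalan, show (2 * k + 1 + 1) / 2 = k + 1 by omega,
    add_tsub_cancel_right, prod_Icc_natCast_add_eq_factorial_div n (zero_le k),
    prod_Icc_natCast_add_eq_factorial_div n (show k + 2 ≤ 2 * k + 1 + 1 by omega),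
    cast_catalan_eq_choose_div, cast_choose ℚ (by omega), cast_choose ℚ (by omega)]
  -- chain the factorial arguments by successors, so that `factorial_succ` exposes common factors
  rw [show 2 * n + (2 * k + 1) - n = n + 2 * k + 1 by omega,
    show 2 * (n + (k + 1)) - (n + (k + 1)) = n + k + 1 by omega, add_zero,
    show n + (2 * k + 1 + 1) = n + 2 * k + 1 + 1 by ring, show n + (k + 2) = n + k + 1 + 1 by ring,
    show 2 * (n + (k + 1)) = 2 * n + 2 * k + 1 + 1 by ring, ← add_assoc n k 1,
    show 2 * n + (2 * k + 1) = 2 * n + 2 * k + 1 by ring]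
  simp only [factorial_succ]
  push_cast
  field_simp
  ring
end

section
/- Catalan's k-fold convolution formula: for m ≥ 1 odd and n ≥ 0, the sum over all m-tuples (i_1,…,i_m) of nonnegative integers with i_1+⋯+i_m = n of C_{i_1}⋯C_{i_m} equals [m·(n+1)(n+2)⋯(n+(m−1)/2)] / [(n+(m+3)/2)·(n+(m+3)/2+1)⋯(n+m)] · C_{n+(m−1)/2}. -/
/-!
The `m`-fold convolution is the `n`-th coefficient of `C(x)^m`, where `C = 1 + x C²` is the
Catalan series. Multiplying that functional equation by `C^m` gives
`[x^(n+1)] C^(m+1) = [x^(n+1)] C^m + [x^n] C^(m+2)`, a recurrence that together with the values at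
`m = 1` and `n = 0` determines all coefficients. The closed form `(m+1)(2n+m)! / (n! (n+m+1)!)`
for `[x^n] C^(m+1)` satisfies the same recurrence and boundary values; for odd exponents it is
rewritten as the stated quotient of products times `C_{n+(m-1)/2}`.
-/

open Finset PowerSeries Nat

theorem PowerSeries.coeff_pow_eq_sum_antidiagonalTuple_s9 {R : Type*} [CommSemiring R]
    (p : R⟦X⟧) (m n : ℕ) :
    coeff n (p ^ m) = ∑ f ∈ Finset.Nat.antidiagonalTuple m n, ∏ i, coeff (f i) p := by
  classical
  rw [← piAntidiag_univ_fin_eq_antidiagonalTuple, ← Fin.prod_const, coeff_prod, finsuppAntidiag,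
    sum_map, ← sum_attach (piAntidiag _ _)]
  rfl

theorem PowerSeries.catalanSeries_pow_succ (m : ℕ) :
    catalanSeries ^ (m + 1) = catalanSeries ^ m + X * catalanSeries ^ (m + 2) :=
  calc catalanSeries ^ (m + 1) = catalanSeries ^ m * (catalanSeries ^ 2 * X + 1) := by
        rw [catalanSeries_sq_mul_X_add_one, pow_succ]
    _ = catalanSeries ^ m + X * catalanSeries ^ (m + 2) := by ring

theorem Nat.catalan_mul_factorial_mul_factorial_succ (n : ℕ) :
    catalan n * n ! * (n + 1)! = (2 * n)! := by
  rw [factorial_succ, ← choose_mul_factorial_mul_factorial (show n ≤ 2 * n by omega),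
    show 2 * n - n = n by omega, ← centralBinom_eq_two_mul_choose,
    ← succ_mul_catalan_eq_centralBinom]
  ring

theorem Nat.factorial_mul_prod_Icc_add (n a k : ℕ) :
    (n + a)! * ∏ t ∈ Icc (a + 1) (a + k), (n + t) = (n + a + k)! := by
  induction k with
  | zero => simp
  | succ k ih =>
    rw [← add_assoc, prod_Icc_succ_top (by omega), ← mul_assoc, ih, ← add_assoc (n + a) k 1,
      factorial_succ]
    ring

/-- The closed form of the `n`-th coefficient of `catalanSeries ^ (m + 1)`; the exponent is
shifted so that the recurrence below holds for every `m`. -/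
def catalanPowFormula (m n : ℕ) : ℚ := (m + 1) * (2 * n + m)! / (n ! * (n + m + 1)!)

theorem catalanPowFormula_zero_left (n : ℕ) : catalanPowFormula 0 n = catalan n := by
  rw [catalanPowFormula, eq_comm, eq_div_iff (by positivity)]
  simp only [Nat.cast_zero, zero_add, add_zero, one_mul, ← mul_assoc]
  exact_mod_cast catalan_mul_factorial_mul_factorial_succ n

theorem catalanPowFormula_zero_right (m : ℕ) : catalanPowFormula m 0 = 1 := by
  rw [catalanPowFormula, div_eq_one_iff_eq (by positivity)]
  simp [factorial_succ]

theorem catalanPowFormula_succ_succ (m n : ℕ) :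
    catalanPowFormula (m + 1) (n + 1) =
      catalanPowFormula m (n + 1) + catalanPowFormula (m + 2) n := by
  simp only [catalanPowFormula, show 2 * (n + 1) + (m + 1) = 2 * n + m + 2 + 1 by ring,
    show 2 * (n + 1) + m = 2 * n + m + 2 by ring, show 2 * n + (m + 2) = 2 * n + m + 2 by ring,
    show n + 1 + (m + 1) + 1 = n + m + 2 + 1 by ring, show n + 1 + m + 1 = n + m + 2 by ring,
    show n + (m + 2) + 1 = n + m + 2 + 1 by ring, factorial_succ (2 * n + m + 2),
    factorial_succ (n + m + 2), factorial_succ n]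
  push_cast
  field_simp
  ring

theorem PowerSeries.coeff_catalanSeries_pow_succ (m n : ℕ) :
    ((coeff n (catalanSeries ^ (m + 1)) : ℕ) : ℚ) = catalanPowFormula m n := by
  induction n generalizing m with
  | zero => simp [catalanPowFormula_zero_right]
  | succ n ihn =>
    induction m with
    | zero => rw [pow_one, catalanSeries_coeff, catalanPowFormula_zero_left]
    | succ m ihm =>
      rw [catalanSeries_pow_succ, map_add, coeff_succ_X_mul, Nat.cast_add, ihm, ihn,
        catalanPowFormula_succ_succ]

theorem catalan_convolution_odd_general (m n : ℕ) (hmo : Odd m) :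
    (∑ f ∈ Finset.Nat.antidiagonalTuple m n, ∏ i, (catalan (f i) : ℚ)) =
      (m * ∏ t ∈ Finset.Icc 1 ((m - 1) / 2), ((n : ℚ) + t)) /
          (∏ t ∈ Finset.Icc ((m + 3) / 2) m, ((n : ℚ) + t)) *
        (catalan (n + (m - 1) / 2) : ℚ) := by
  obtain ⟨k, rfl⟩ := hmo
  have hsum : ∑ f ∈ Nat.antidiagonalTuple (2 * k + 1) n, ∏ i, (catalan (f i) : ℚ) =
      catalanPowFormula (2 * k) n := by
    rw [← coeff_catalanSeries_pow_succ, coeff_pow_eq_sum_antidiagonalTuple_s9]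
    simp
  have hlow : (n ! : ℚ) * ∏ t ∈ Icc 1 k, ((n : ℚ) + t) = (n + k)! := by
    have := factorial_mul_prod_Icc_add n 0 k
    simp only [add_zero, zero_add] at this
    exact_mod_cast this
  have hhigh : ((n + k + 1)! : ℚ) * ∏ t ∈ Icc (k + 2) (2 * k + 1), ((n : ℚ) + t) =
      (n + 2 * k + 1)! := by
    have := factorial_mul_prod_Icc_add n (k + 1) k
    rw [show n + (k + 1) + k = n + 2 * k + 1 by ring, show k + 1 + k = 2 * k + 1 by ring] at this
    exact_mod_cast this
  have hcat : (catalan (n + k) : ℚ) * (n + k)! * (n + k + 1)! = (2 * n + 2 * k)! := by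
    rw [show 2 * n + 2 * k = 2 * (n + k) by ring]
    exact_mod_cast catalan_mul_factorial_mul_factorial_succ (n + k)
  rw [hsum, catalanPowFormula, show (2 * k + 1 - 1) / 2 = k by omega,
    show (2 * k + 1 + 3) / 2 = k + 2 by omega, ← hcat, ← hhigh, ← hlow]
  field_simp
  push_cast
  ring

/-- Catalan's `k`-fold convolution formula, odd case: for `m ≥ 1` odd and `n ≥ 0`,
`∑_{i₁+⋯+i_m = n} C_{i₁}⋯C_{i_m}
  = [m·(n+1)⋯(n+(m-1)/2)] / [(n+(m+3)/2)⋯(n+m)] · C_{n+(m-1)/2}`. -/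
theorem catalan_convolution_odd (m n : ℕ) (hm : 1 ≤ m) (hmo : Odd m) :
    (∑ f ∈ Finset.Nat.antidiagonalTuple m n, ∏ i, (catalan (f i) : ℚ)) =
      (m * ∏ t ∈ Finset.Icc 1 ((m - 1) / 2), ((n : ℚ) + t)) /
          (∏ t ∈ Finset.Icc ((m + 3) / 2) m, ((n : ℚ) + t)) *
        (catalan (n + (m - 1) / 2) : ℚ) :=
  catalan_convolution_odd_general m n hmo
end

section
/- For n even, n ≥ 6, the number of 2-dissections of a convex n-gon modulo the cyclic action of Z_n equals (1/12)·n·(n−2)·(n−4); for n odd, n ≥ 5, it equals (1/12)·(n+1)·(n−3)·(n−4). -/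
/-!
By Burnside's lemma, `n` times the number of orbits is the number of pairs (rotation,
2-dissection fixed by it). The identity fixes every 2-dissection: these are the pairs of the
`n(n-3)/2` diagonals minus the crossing pairs, and a crossing pair is the same thing as its four
endpoints, so there are `C(n(n-3)/2, 2) - C(n, 4)` of them. A nontrivial rotation fixing a
2-dissection must swap its two diagonals or fix both; as two distinct diameters always cross,
this forces the rotation to be the half-turn (so `n` is even), and the fixed 2-dissections are
then the pairs `{p, p + n/2}` for the `n(n-3)/2 - n/2` diagonals `p` that are not diameters.
-/

/-- `p` is a diagonal of the convex `n`-gon with vertices `ZMod n`. -/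
def IsDiagonal (n : ℕ) (p : Sym2 (ZMod n)) : Prop :=
  ∀ a b : ZMod n, p = s(a, b) → a ≠ b ∧ a + 1 ≠ b ∧ b + 1 ≠ a

/-- Diagonals `p = {a,b}` and `q = {c,d}` cross: for some representatives,
`a < c < b < d` (in terms of the labels `0,…,n-1`). Quantifying this over both orders of
`p, q` captures the full crossing condition. -/
def Crossing (n : ℕ) (p q : Sym2 (ZMod n)) : Prop :=
  ∃ a b c d : ZMod n, p = s(a, b) ∧ q = s(c, d) ∧
    a.val < c.val ∧ c.val < b.val ∧ b.val < d.val

/-- A 2-dissection of the `n`-gon: two distinct pairwise non-crossing diagonals. -/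
def IsTwoDissection (n : ℕ) (D : Finset (Sym2 (ZMod n))) : Prop :=
  D.card = 2 ∧ (∀ p ∈ D, IsDiagonal n p) ∧ ∀ p ∈ D, ∀ q ∈ D, ¬Crossing n p q

open Finset

theorem Sym2.map_add_map_add {α : Type*} [AddSemigroup α] (p : Sym2 α) (k l : α) :
    (p.map (· + k)).map (· + l) = p.map (· + (k + l)) := by
  rw [Sym2.map_map]
  congr 1
  funext x
  simp [add_assoc]

theorem Sym2.map_add_zero {α : Type*} [AddZeroClass α] (p : Sym2 α) : p.map (· + 0) = p := by
  simp

theorem Sym2.map_add_map_add_self {G : Type*} [AddCommGroup G] {k : G} (hkk : k + k = 0)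
    (p : Sym2 G) : (p.map (· + k)).map (· + k) = p := by
  rw [Sym2.map_add_map_add, hkk, Sym2.map_add_zero]

theorem Sym2.map_add_mk_add {G : Type*} [AddCommGroup G] {k : G} (hkk : k + k = 0) (a : G) :
    s(a, a + k).map (· + k) = s(a, a + k) := by
  rw [Sym2.map_mk, add_assoc, hkk, add_zero, Sym2.eq_swap]

theorem Sym2.exists_eq_mk_add_of_map_add_eq_self {G : Type*} [AddCommGroup G] {k : G} (hk : k ≠ 0)
    {p : Sym2 G} (hp : p.map (· + k) = p) : k + k = 0 ∧ ∃ a, p = s(a, a + k) := by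
  induction p using Sym2.ind with
  | _ a b =>
    rcases Sym2.eq_iff.1 (Sym2.map_mk _ _ _ ▸ hp) with ⟨h, -⟩ | ⟨ha, hb⟩
    · exact absurd (add_eq_left.1 h) hk
    · refine ⟨?_, a, by rw [ha]⟩
      rw [← ha, add_assoc] at hb
      exact add_eq_left.1 hb

theorem ZMod.natCast_ne_zero_of_lt {n m : ℕ} (h0 : 0 < m) (h : m < n) : (m : ZMod n) ≠ 0 := by
  rw [Ne, ZMod.natCast_eq_zero_iff]
  exact Nat.not_dvd_of_pos_of_lt h0 h

theorem ZMod.val_add_eq_or {n : ℕ} [NeZero n] (a b : ZMod n) :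
    (a + b).val = a.val + b.val ∨ (a + b).val + n = a.val + b.val := by
  rcases lt_or_ge (a.val + b.val) n with h | h
  · exact .inl (ZMod.val_add_of_lt h)
  · exact .inr (ZMod.val_add_val_of_le h).symm

theorem ZMod.val_add_val_of_add_self_eq_zero {n : ℕ} [NeZero n] {k : ZMod n} (hk : k ≠ 0)
    (hkk : k + k = 0) : k.val + k.val = n := by
  have := ZMod.val_add_eq_or k k
  rw [hkk, ZMod.val_zero] at this
  have := (ZMod.val_ne_zero k).2 hk
  omega

theorem ZMod.exists_ne_zero_add_self_eq_zero {n : ℕ} [NeZero n] (hn : Even n) :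
    ∃ k : ZMod n, k ≠ 0 ∧ k + k = 0 := by
  obtain ⟨t, rfl⟩ := hn
  have ht : t < t + t := by have := NeZero.ne (t + t); omega
  refine ⟨t, ZMod.natCast_ne_zero_of_lt (by omega) ht, ?_⟩
  exact_mod_cast ZMod.natCast_self (t + t)

theorem Finset.sort_four {α : Type*} [LinearOrder α] {a b c d : α} (hab : a < b) (hbc : b < c)
    (hcd : c < d) : ({a, b, c, d} : Finset α).sort = [a, b, c, d] := by
  have hac := hab.trans hbc
  have hbd := hbc.trans hcd
  have had := hab.trans hbd
  have := (List.toFinset_sort (α := α) (· ≤ ·) (l := [a, b, c, d]) ?_).2 ?_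
  · simpa using this
  · simp [hab.ne, hbc.ne, hcd.ne, hac.ne, hbd.ne, had.ne]
  · simp [hab.le, hbc.le, hcd.le, hac.le, hbd.le, had.le]

theorem Finset.card_insert_four {α : Type*} [LinearOrder α] {a b c d : α} (hab : a < b)
    (hbc : b < c) (hcd : c < d) : #({a, b, c, d} : Finset α) = 4 := by
  rw [← length_sort (· ≤ ·), sort_four hab hbc hcd]
  rfl

theorem Finset.exists_eq_insert_four {α : Type*} [LinearOrder α] {s : Finset α} (hs : #s = 4) :
    ∃ a b c d, a < b ∧ b < c ∧ c < d ∧ s = {a, b, c, d} := by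
  have hmono := (s.orderEmbOfFin hs).strictMono
  refine ⟨_, _, _, _, hmono (show (0 : Fin 4) < 1 by decide),
    hmono (show (1 : Fin 4) < 2 by decide), hmono (show (2 : Fin 4) < 3 by decide), ?_⟩
  conv_lhs => rw [← s.image_orderEmbOfFin_univ hs]
  ext x
  simp only [mem_image, mem_univ, true_and, Fin.exists_fin_succ, Fin.exists_fin_zero]
  simp [eq_comm]

theorem Sym2.biUnion_toFinset_pair {α : Type*} [DecidableEq α] (a b c d : α) :
    ({s(a, c), s(b, d)} : Finset (Sym2 α)).biUnion Sym2.toFinset = {a, b, c, d} := by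
  ext
  simp only [biUnion_insert, Sym2.toFinset_mk_eq, singleton_biUnion, union_insert, insert_union,
    singleton_union, mem_insert, mem_singleton]
  tauto

theorem Nat.two_mul_cast_choose_two (m : ℕ) : 2 * (m.choose 2 : ℤ) = m * (m - 1) := by
  have := descPochhammer_eval_eq_descFactorial ℤ m 2
  rw [Nat.descFactorial_eq_factorial_mul_choose] at this
  simp [descPochhammer_succ_right, Nat.factorial] at this
  linear_combination -this

theorem Nat.twentyFour_mul_cast_choose_four (m : ℕ) :
    24 * (m.choose 4 : ℤ) = m * (m - 1) * (m - 2) * (m - 3) := by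
  have := descPochhammer_eval_eq_descFactorial ℤ m 4
  rw [Nat.descFactorial_eq_factorial_mul_choose] at this
  simp [descPochhammer_succ_right, Nat.factorial] at this
  linear_combination -this

section Polygon

variable {n : ℕ}

theorem isDiagonal_mk_iff {a b : ZMod n} :
    IsDiagonal n s(a, b) ↔ a ≠ b ∧ a + 1 ≠ b ∧ b + 1 ≠ a := by
  refine ⟨fun h => h a b rfl, fun h x y hxy => ?_⟩
  rcases Sym2.eq_iff.1 hxy with ⟨rfl, rfl⟩ | ⟨rfl, rfl⟩
  · exact h
  · exact ⟨h.1.symm, h.2.2, h.2.1⟩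

theorem IsDiagonal.map_add {p : Sym2 (ZMod n)} (h : IsDiagonal n p) (k : ZMod n) :
    IsDiagonal n (p.map (· + k)) := by
  induction p using Sym2.ind with
  | _ a b => simpa [isDiagonal_mk_iff, add_right_comm _ k 1] using h

def Crosses (n : ℕ) (p q : Sym2 (ZMod n)) : Prop := Crossing n p q ∨ Crossing n q p

theorem Crosses.symm {p q : Sym2 (ZMod n)} (h : Crosses n p q) : Crosses n q p :=
  Or.symm h

theorem Crossing.ne {p q : Sym2 (ZMod n)} (h : Crossing n p q) : p ≠ q := by
  rintro rfl
  obtain ⟨a, b, c, d, rfl, hq, hac, hcb, hbd⟩ := h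
  rcases Sym2.eq_iff.1 hq with ⟨rfl, rfl⟩ | ⟨rfl, rfl⟩ <;> omega

variable [NeZero n]

theorem Crossing.crosses_map_add_one {p q : Sym2 (ZMod n)} (h : Crossing n p q) :
    Crosses n (p.map (· + 1)) (q.map (· + 1)) := by
  obtain ⟨a, b, c, d, rfl, rfl, hac, hcb, hbd⟩ := h
  have hd := d.val_lt
  have hone : (1 : ZMod n).val = 1 := ZMod.val_one'' (by omega)
  have val_succ (x : ZMod n) : (x + 1).val = if x.val + 1 = n then 0 else x.val + 1 := by
    have := x.val_lt
    have := (x + 1).val_lt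
    rcases ZMod.val_add_eq_or x 1 with h | h <;> split_ifs <;> omega
  simp only [Sym2.map_mk]
  by_cases hw : d.val + 1 = n
  · refine .inr ⟨d + 1, c + 1, a + 1, b + 1, Sym2.eq_swap, rfl, ?_, ?_, ?_⟩ <;>
      simp only [val_succ] <;> split_ifs <;> omega
  · refine .inl ⟨a + 1, b + 1, c + 1, d + 1, rfl, rfl, ?_, ?_, ?_⟩ <;>
      simp only [val_succ] <;> split_ifs <;> omega

theorem Crosses.map_add {p q : Sym2 (ZMod n)} (h : Crosses n p q) (k : ZMod n) :
    Crosses n (p.map (· + k)) (q.map (· + k)) := by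
  rw [← ZMod.natCast_zmod_val k]
  induction k.val with
  | zero => simpa using h
  | succ j ih =>
    rw [Nat.cast_succ, ← Sym2.map_add_map_add, ← Sym2.map_add_map_add]
    exact ih.elim Crossing.crosses_map_add_one fun h' => h'.crosses_map_add_one.symm

theorem crosses_map_add_iff {p q : Sym2 (ZMod n)} (k : ZMod n) :
    Crosses n (p.map (· + k)) (q.map (· + k)) ↔ Crosses n p q := by
  refine ⟨fun h => ?_, fun h => h.map_add k⟩
  simpa [Sym2.map_add_map_add] using h.map_add (-k)

instance : DecidablePred (IsDiagonal n) := fun _ => by unfold IsDiagonal; infer_instance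

instance : DecidableRel (Crossing n) := fun _ _ => by unfold Crossing; infer_instance

instance : DecidablePred (IsTwoDissection n) := fun _ => by
  unfold IsTwoDissection; infer_instance

def diagonals (n : ℕ) [NeZero n] : Finset (Sym2 (ZMod n)) := {p | IsDiagonal n p}

@[simp]
theorem mem_diagonals {p : Sym2 (ZMod n)} : p ∈ diagonals n ↔ IsDiagonal n p :=
  mem_filter_univ _

def twoDissections (n : ℕ) [NeZero n] : Finset (Finset (Sym2 (ZMod n))) :=
  {D | IsTwoDissection n D}

@[simp]
theorem mem_twoDissections {D : Finset (Sym2 (ZMod n))} :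
    D ∈ twoDissections n ↔ IsTwoDissection n D :=
  mem_filter_univ _

def crossingPairs (n : ℕ) [NeZero n] : Finset (Finset (Sym2 (ZMod n))) :=
  {D ∈ (diagonals n).powersetCard 2 | ∃ p ∈ D, ∃ q ∈ D, Crossing n p q}

def fixedDissections (n : ℕ) [NeZero n] (k : ZMod n) : Finset (Finset (Sym2 (ZMod n))) :=
  {D | IsTwoDissection n D ∧ D.image (Sym2.map (· + k)) = D}

@[simp]
theorem mem_fixedDissections {k : ZMod n} {D : Finset (Sym2 (ZMod n))} :
    D ∈ fixedDissections n k ↔ IsTwoDissection n D ∧ D.image (Sym2.map (· + k)) = D :=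
  mem_filter_univ _

theorem IsTwoDissection.image_map_add {D : Finset (Sym2 (ZMod n))} (h : IsTwoDissection n D)
    (k : ZMod n) : IsTwoDissection n (D.image (Sym2.map (· + k))) := by
  obtain ⟨hcard, hdiag, hcross⟩ := h
  refine ⟨?_, ?_, ?_⟩
  · rw [card_image_of_injective _ (Sym2.map.injective (add_left_injective k)), hcard]
  · simp only [mem_image, forall_exists_index, and_imp, forall_apply_eq_imp_iff₂]
    exact fun p hp => (hdiag p hp).map_add k
  · simp only [mem_image, forall_exists_index, and_imp, forall_apply_eq_imp_iff₂]
    intro p hp q hq hpq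
    rcases (crosses_map_add_iff k).1 (.inl hpq) with h | h
    exacts [hcross p hp q hq h, hcross q hq p hp h]

instance : AddAction (ZMod n) {D : Finset (Sym2 (ZMod n)) // IsTwoDissection n D} where
  vadd k D := ⟨D.1.image (Sym2.map (· + k)), D.2.image_map_add k⟩
  zero_vadd D := Subtype.ext <| by
    change D.1.image _ = D.1
    simp
  add_vadd k l D := Subtype.ext <| by
    change D.1.image _ = (D.1.image _).image _
    simp [image_image, Function.comp_def, Sym2.map_add_map_add, add_comm k l]

theorem nat_card_quot_mul_eq_sum_card_fixedDissections :
    Nat.card (Quot fun (D E : {D : Finset (Sym2 (ZMod n)) // IsTwoDissection n D}) =>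
        ∃ k : ZMod n, D.1.image (Sym2.map (· + k)) = E.1) * n
      = ∑ k : ZMod n, #(fixedDissections n k) := by
  classical
  set X := {D : Finset (Sym2 (ZMod n)) // IsTwoDissection n D}
  have hrel (D E : X) : (∃ k : ZMod n, D.1.image (Sym2.map (· + k)) = E.1) ↔
      AddAction.orbitRel (ZMod n) X D E := by
    rw [AddAction.orbitRel_apply, AddAction.mem_orbit_symm, AddAction.mem_orbit_iff]
    exact exists_congr fun k => ⟨fun h => Subtype.ext h, congrArg Subtype.val⟩
  have hfix (k : ZMod n) : Fintype.card (AddAction.fixedBy X k) = #(fixedDissections n k) := by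
    rw [fixedDissections, ← Fintype.card_subtype]
    exact Fintype.card_congr ((Equiv.subtypeEquivRight fun D => Subtype.ext_iff).trans
      (Equiv.subtypeSubtypeEquivSubtypeInter (IsTwoDissection n)
        fun D => D.image (Sym2.map (· + k)) = D))
  have burnside := AddAction.sum_card_fixedBy_eq_card_orbits_mul_card_addGroup (ZMod n) X
  rw [ZMod.card] at burnside
  rw [(Nat.card_congr (Quot.congrRight hrel)).trans
    (Nat.card_eq_fintype_card (α := AddAction.orbitRel.Quotient (ZMod n) X)), ← burnside]
  exact sum_congr rfl fun k _ => hfix k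

theorem compl_diagonals :
    (diagonals n)ᶜ = univ.image (fun a : ZMod n => s(a, a)) ∪ univ.image fun a => s(a, a + 1) := by
  ext p
  induction p using Sym2.ind with
  | _ x y =>
    simp only [mem_compl, mem_diagonals, isDiagonal_mk_iff, mem_union, mem_image, mem_univ,
      true_and, Sym2.eq_iff]
    grind

theorem two_mul_card_diagonals (hn : 3 ≤ n) : 2 * (#(diagonals n) : ℤ) = n * (n - 3) := by
  have h1 : (1 : ZMod n) ≠ 0 := by exact_mod_cast ZMod.natCast_ne_zero_of_lt one_pos (by omega)
  have h2 : (2 : ZMod n) ≠ 0 := by exact_mod_cast ZMod.natCast_ne_zero_of_lt two_pos (by omega)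
  have hloops : Function.Injective fun a : ZMod n => s(a, a) := fun a b h => by simpa using h
  have hsides : Function.Injective fun a : ZMod n => s(a, a + 1) := fun a b h => by
    rcases Sym2.eq_iff.1 h with ⟨h, -⟩ | ⟨h, h'⟩
    exacts [h, absurd (by linear_combination h' - h) h2]
  have hdisj : Disjoint (univ.image fun a : ZMod n => s(a, a)) (univ.image fun a => s(a, a + 1)) := by
    simp only [disjoint_left, mem_image, mem_univ, true_and, forall_exists_index,
      forall_apply_eq_imp_iff, Sym2.eq_iff, not_exists]
    intro a b
    rintro (⟨rfl, h⟩ | ⟨rfl, h⟩) <;> exact h1 (by linear_combination h)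
  have hcompl : #(diagonals n)ᶜ = 2 * n := by
    rw [compl_diagonals, card_union_of_disjoint hdisj, card_image_of_injective _ hloops,
      card_image_of_injective _ hsides, card_univ, ZMod.card, two_mul]
  have htotal : #(diagonals n) + #(diagonals n)ᶜ = (n + 1).choose 2 := by
    rw [card_add_card_compl, Sym2.card, ZMod.card]
  rw [hcompl] at htotal
  have hchoose := Nat.two_mul_cast_choose_two (n + 1)
  zify at htotal
  push_cast at hchoose
  linear_combination 2 * htotal + hchoose

theorem card_twoDissections_add_card_crossingPairs :
    #(twoDissections n) + #(crossingPairs n) = (#(diagonals n)).choose 2 := by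
  rw [← card_powersetCard, ← card_filter_add_card_filter_not (s := (diagonals n).powersetCard 2)
    (p := fun D => ∃ p ∈ D, ∃ q ∈ D, Crossing n p q), add_comm, crossingPairs]
  congr 2
  ext D
  simp only [mem_twoDissections, IsTwoDissection, not_exists, not_and, mem_filter,
    mem_powersetCard, subset_iff, mem_diagonals]
  tauto

section ValOrder

/-- Vertices ordered by their labels `0, …, n - 1`, as in `Crossing`. It keeps the `DecidableEq`
instance of `ZMod n`, so that finsets of vertices built under this order are the usual ones. -/
abbrev ZMod.valLinearOrder (n : ℕ) [NeZero n] : LinearOrder (ZMod n) where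
  __ := LinearOrder.lift' ZMod.val (ZMod.val_injective n)
  toDecidableEq := inferInstance
  compare_eq_compareOfLessAndEq a b :=
    compare_of_injective_eq_compareOfLessAndEq a b ZMod.val (ZMod.val_injective n)

attribute [local instance] ZMod.valLinearOrder

-- Both arcs cut off by `s(a, c)` contain a vertex (`b`, resp. `d`).
theorem isDiagonal_mk_of_lt {a b c d : ZMod n} (hab : a < b) (hbc : b < c) (hd : d < a ∨ c < d) :
    IsDiagonal n s(a, c) := by
  change a.val < b.val at hab
  change b.val < c.val at hbc
  change d.val < a.val ∨ c.val < d.val at hd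
  have := c.val_lt
  have := d.val_lt
  have hone : (1 : ZMod n).val = 1 := ZMod.val_one'' (by omega)
  have ha := ZMod.val_add_eq_or a 1
  have hc := ZMod.val_add_eq_or c 1
  have := (a + 1).val_lt
  have := (c + 1).val_lt
  rw [isDiagonal_mk_iff]
  refine ⟨?_, ?_, ?_⟩ <;> intro h <;> have := congrArg ZMod.val h <;> omega

theorem mem_crossingPairs_iff {D : Finset (Sym2 (ZMod n))} :
    D ∈ crossingPairs n ↔ ∃ a b c d, a < b ∧ b < c ∧ c < d ∧ D = {s(a, c), s(b, d)} := by
  constructor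
  · simp only [crossingPairs, mem_filter, mem_powersetCard]
    rintro ⟨⟨-, hcard⟩, p, hp, q, hq, hpq⟩
    obtain ⟨a, c, b, d, rfl, rfl, hab, hbc, hcd⟩ := hpq
    refine ⟨a, b, c, d, hab, hbc, hcd, (eq_of_subset_of_card_le ?_ ?_).symm⟩
    · simp [insert_subset_iff, hp, hq]
    · rw [hcard, card_pair (Crossing.ne ⟨a, c, b, d, rfl, rfl, hab, hbc, hcd⟩)]
  · rintro ⟨a, b, c, d, hab, hbc, hcd, rfl⟩
    have hcross : Crossing n s(a, c) s(b, d) := ⟨a, c, b, d, rfl, rfl, hab, hbc, hcd⟩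
    simp only [crossingPairs, mem_filter, mem_powersetCard, insert_subset_iff,
      singleton_subset_iff, mem_diagonals]
    exact ⟨⟨⟨isDiagonal_mk_of_lt hab hbc (.inr hcd),
      isDiagonal_mk_of_lt hbc hcd (.inl hab)⟩, card_pair hcross.ne⟩,
      _, mem_insert_self _ _, _, mem_insert_of_mem (mem_singleton_self _), hcross⟩

theorem card_crossingPairs : #(crossingPairs n) = n.choose 4 := by
  rw [show n.choose 4 = #((univ : Finset (ZMod n)).powersetCard 4) by
    rw [card_powersetCard, card_univ, ZMod.card]]
  -- a crossing pair is determined by its four endpoints, and any four vertices `a < b < c < d`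
  -- carry exactly one crossing pair, `{s(a, c), s(b, d)}`
  refine card_nbij (fun D => D.biUnion Sym2.toFinset) ?_ ?_ ?_
  · intro D hD
    obtain ⟨a, b, c, d, hab, hbc, hcd, rfl⟩ := mem_crossingPairs_iff.1 hD
    simp only [mem_coe, Sym2.biUnion_toFinset_pair, mem_powersetCard]
    exact ⟨subset_univ _, card_insert_four hab hbc hcd⟩
  · intro D hD E hE hDE
    obtain ⟨a, b, c, d, hab, hbc, hcd, rfl⟩ := mem_crossingPairs_iff.1 hD
    obtain ⟨a', b', c', d', hab', hbc', hcd', rfl⟩ := mem_crossingPairs_iff.1 hE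
    have := congrArg sort hDE
    simp only [Sym2.biUnion_toFinset_pair] at this
    rw [sort_four hab hbc hcd, sort_four hab' hbc' hcd'] at this
    simp only [List.cons.injEq, and_true] at this
    obtain ⟨rfl, rfl, rfl, rfl⟩ := this
    rfl
  · intro s hs
    obtain ⟨a, b, c, d, hab, hbc, hcd, rfl⟩ := exists_eq_insert_four (mem_powersetCard.1 hs).2
    exact ⟨_, mem_crossingPairs_iff.2 ⟨a, b, c, d, hab, hbc, hcd, rfl⟩,
      Sym2.biUnion_toFinset_pair a b c d⟩

end ValOrder

theorem twelve_mul_card_twoDissections (hn : 3 ≤ n) :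
    12 * (#(twoDissections n) : ℤ) = n * (n + 1) * (n - 3) * (n - 4) := by
  have hsplit := card_twoDissections_add_card_crossingPairs (n := n)
  rw [card_crossingPairs] at hsplit
  have hdiag := two_mul_card_diagonals hn
  have h2 := Nat.two_mul_cast_choose_two #(diagonals n)
  have h4 := Nat.twentyFour_mul_cast_choose_four n
  zify at hsplit
  refine mul_left_cancel₀ (two_ne_zero (α := ℤ)) ?_
  linear_combination 24 * hsplit - h4 + 12 * h2 +
    (3 * (2 * (#(diagonals n) : ℤ) + n * (n - 3)) - 6) * hdiag

theorem crosses_of_add_self_eq_zero {k : ZMod n} (hk : k ≠ 0) (hkk : k + k = 0) {a c : ZMod n}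
    (hne : s(a, a + k) ≠ s(c, c + k)) : Crosses n s(a, a + k) s(c, c + k) := by
  have hn := ZMod.val_add_val_of_add_self_eq_zero hk hkk
  have low (x : ZMod n) : ∃ y : ZMod n, s(y, y + k) = s(x, x + k) ∧ y.val < k.val := by
    have := ZMod.val_add_eq_or x k
    have := x.val_lt
    have := (x + k).val_lt
    by_cases hx : x.val < k.val
    · exact ⟨x, rfl, hx⟩
    · exact ⟨x + k, Sym2.map_add_mk_add hkk x, by omega⟩
  obtain ⟨a', ha', ha⟩ := low a
  obtain ⟨c', hc', hc⟩ := low c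
  rw [← ha', ← hc'] at hne ⊢
  have := ZMod.val_add_eq_or a' k
  have := ZMod.val_add_eq_or c' k
  have hac : a'.val ≠ c'.val := fun h => hne (by rw [ZMod.val_injective n h])
  rcases lt_or_gt_of_ne hac with h | h
  · exact .inl ⟨a', a' + k, c', c' + k, rfl, rfl, h, by omega, by omega⟩
  · exact .inr ⟨c', c' + k, a', a' + k, rfl, rfl, h, by omega, by omega⟩

theorem not_crossing_map_add_of_add_self_eq_zero {k : ZMod n} (hk : k ≠ 0) (hkk : k + k = 0)
    {p : Sym2 (ZMod n)} (hp : p.map (· + k) ≠ p) : ¬Crossing n p (p.map (· + k)) := by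
  induction p using Sym2.ind with
  | _ a b =>
    rw [Sym2.map_mk] at hp ⊢
    have hb : b ≠ a + k := by
      rintro rfl
      exact hp (by rw [add_assoc, hkk, add_zero, Sym2.eq_swap])
    have ha : a ≠ b + k := by
      rintro rfl
      rw [add_assoc, hkk, add_zero] at hb
      exact hb rfl
    have hn := ZMod.val_add_val_of_add_self_eq_zero hk hkk
    have := ZMod.val_add_eq_or a k
    have := ZMod.val_add_eq_or b k
    have := a.val_lt
    have := b.val_lt
    have := (a + k).val_lt
    have := (b + k).val_lt
    have hb' : b.val ≠ (a + k).val := fun h => hb (ZMod.val_injective n h)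
    have ha' : a.val ≠ (b + k).val := fun h => ha (ZMod.val_injective n h)
    rintro ⟨A, B, C, D, hp, hq, h1, h2, h3⟩
    rcases Sym2.eq_iff.1 hp with ⟨rfl, rfl⟩ | ⟨rfl, rfl⟩ <;>
      rcases Sym2.eq_iff.1 hq with ⟨rfl, rfl⟩ | ⟨rfl, rfl⟩ <;> omega

theorem isTwoDissection_pair_map_add {k : ZMod n} (hk : k ≠ 0) (hkk : k + k = 0)
    {p : Sym2 (ZMod n)} (hp : IsDiagonal n p) (hpk : p.map (· + k) ≠ p) :
    IsTwoDissection n {p, p.map (· + k)} := by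
  have hpk' : (p.map (· + k)).map (· + k) ≠ p.map (· + k) := by
    rwa [Sym2.map_add_map_add_self hkk, ne_comm]
  refine ⟨card_pair hpk.symm, ?_, ?_⟩
  · simp only [mem_insert, mem_singleton, forall_eq_or_imp, forall_eq]
    exact ⟨hp, hp.map_add k⟩
  · simp only [mem_insert, mem_singleton, forall_eq_or_imp, forall_eq]
    refine ⟨⟨fun h => h.ne rfl, not_crossing_map_add_of_add_self_eq_zero hk hkk hpk⟩,
      ?_, fun h => h.ne rfl⟩
    simpa [Sym2.map_add_map_add_self hkk] using
      not_crossing_map_add_of_add_self_eq_zero hk hkk hpk'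

theorem IsTwoDissection.exists_eq_pair_map_add {D : Finset (Sym2 (ZMod n))}
    (hD : IsTwoDissection n D) {k : ZMod n} (hk : k ≠ 0) (hfix : D.image (Sym2.map (· + k)) = D) :
    k + k = 0 ∧ ∃ p ∈ D, p.map (· + k) ≠ p ∧ D = {p, p.map (· + k)} := by
  obtain ⟨hcard, -, hcross⟩ := hD
  obtain ⟨p, q, hpq, rfl⟩ := card_eq_two.1 hcard
  -- a nonzero rotation fixing both chords would make them two crossing diameters
  have not_both_fixed (j : ZMod n) (hj : j ≠ 0) (hp : p.map (· + j) = p)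
      (hq : q.map (· + j) = q) : False := by
    obtain ⟨hjj, a, rfl⟩ := Sym2.exists_eq_mk_add_of_map_add_eq_self hj hp
    obtain ⟨-, c, rfl⟩ := Sym2.exists_eq_mk_add_of_map_add_eq_self hj hq
    rcases crosses_of_add_self_eq_zero hj hjj hpq with h | h
    · exact hcross _ (mem_insert_self _ _) _ (mem_insert_of_mem (mem_singleton_self _)) h
    · exact hcross _ (mem_insert_of_mem (mem_singleton_self _)) _ (mem_insert_self _ _) h
  have hinj := Sym2.map.injective (add_left_injective k)
  have hp := mem_image_of_mem (Sym2.map (· + k)) (mem_insert_self p {q})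
  have hq := mem_image_of_mem (Sym2.map (· + k))
    (mem_insert_of_mem (mem_singleton_self q) : q ∈ ({p, q} : Finset _))
  rw [hfix, mem_insert, mem_singleton] at hp hq
  rcases hp with hp | hp <;> rcases hq with hq | hq
  · exact absurd (hinj (hq.trans hp.symm)) hpq.symm
  · exact (not_both_fixed k hk hp hq).elim
  · have hkk : k + k = 0 := by
      by_contra hkk
      exact not_both_fixed (k + k) hkk (by rw [← Sym2.map_add_map_add, hp, hq])
        (by rw [← Sym2.map_add_map_add, hq, hp])
    exact ⟨hkk, p, mem_insert_self p {q}, hp ▸ hpq.symm, by rw [hp]⟩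
  · exact absurd (hinj (hp.trans hq.symm)) hpq

theorem fixedDissections_zero : fixedDissections n 0 = twoDissections n := by
  ext D
  simp

theorem fixedDissections_eq_empty {k : ZMod n} (hk : k ≠ 0) (hkk : k + k ≠ 0) :
    fixedDissections n k = ∅ := by
  ext D
  simp only [mem_fixedDissections, notMem_empty, iff_false, not_and]
  exact fun hD hfix => hkk (hD.exists_eq_pair_map_add hk hfix).1

theorem two_mul_card_fixedDissections {k : ZMod n} (hk : k ≠ 0) (hkk : k + k = 0) :
    2 * #(fixedDissections n k) = #{p ∈ diagonals n | p.map (· + k) ≠ p} := by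
  have hmaps : ∀ p ∈ {p ∈ diagonals n | p.map (· + k) ≠ p},
      {p, p.map (· + k)} ∈ fixedDissections n k := by
    simp only [mem_filter, mem_diagonals, mem_fixedDissections]
    refine fun p ⟨hp, hpk⟩ => ⟨isTwoDissection_pair_map_add hk hkk hp hpk, ?_⟩
    rw [image_insert, image_singleton, Sym2.map_add_map_add_self hkk, pair_comm]
  -- the fibre of `p ↦ {p, p + k}` over a fixed dissection `D` is `D` itself
  have hfibre : ∀ D ∈ fixedDissections n k,
      #{p ∈ {p ∈ diagonals n | p.map (· + k) ≠ p} | {p, p.map (· + k)} = D} = 2 := by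
    intro D hD
    rw [mem_fixedDissections] at hD
    obtain ⟨-, p, -, hpk, rfl⟩ := hD.1.exists_eq_pair_map_add hk hD.2
    have hp : IsDiagonal n p := hD.1.2.1 p (mem_insert_self _ _)
    rw [← card_pair hpk.symm]
    congr 1
    ext q
    simp only [mem_filter, mem_diagonals, mem_insert, mem_singleton]
    constructor
    · rintro ⟨-, h⟩
      have := mem_insert_self q {q.map (· + k)}
      rwa [h, mem_insert, mem_singleton] at this
    · rintro (rfl | rfl)
      · exact ⟨⟨hp, hpk⟩, rfl⟩
      · rw [Sym2.map_add_map_add_self hkk, pair_comm]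
        exact ⟨⟨hp.map_add k, hpk.symm⟩, rfl⟩
  rw [card_eq_sum_card_fiberwise hmaps, sum_congr rfl hfibre, sum_const, smul_eq_mul, mul_comm]

theorem two_mul_card_filter_map_add_eq_self (hn : 3 ≤ n) {k : ZMod n} (hk : k ≠ 0)
    (hkk : k + k = 0) : 2 * #{p ∈ diagonals n | p.map (· + k) = p} = n := by
  have h2 : (2 : ZMod n) ≠ 0 := by exact_mod_cast ZMod.natCast_ne_zero_of_lt two_pos (by omega)
  have hdiam : {p ∈ diagonals n | p.map (· + k) = p} = univ.image fun a => s(a, a + k) := by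
    ext p
    simp only [mem_filter, mem_diagonals, mem_image, mem_univ, true_and]
    constructor
    · rintro ⟨-, hp⟩
      obtain ⟨-, a, rfl⟩ := Sym2.exists_eq_mk_add_of_map_add_eq_self hk hp
      exact ⟨a, rfl⟩
    · rintro ⟨a, rfl⟩
      refine ⟨isDiagonal_mk_iff.2 ⟨?_, ?_, ?_⟩, Sym2.map_add_mk_add hkk a⟩
      · simpa using hk
      · exact fun h => h2 (by linear_combination hkk + 2 * h)
      · exact fun h => h2 (by linear_combination -hkk + 2 * h)
  have hfibre : ∀ p ∈ univ.image fun a : ZMod n => s(a, a + k),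
      #{a ∈ univ | s(a, a + k) = p} = 2 := by
    simp only [mem_image, mem_univ, true_and, forall_exists_index, forall_apply_eq_imp_iff]
    intro a
    rw [← card_pair (a := a) (b := a + k) (by simpa using hk)]
    congr 1
    ext b
    simp only [mem_filter, mem_univ, true_and, Sym2.eq_iff, mem_insert, mem_singleton]
    constructor
    · rintro (⟨rfl, -⟩ | ⟨rfl, -⟩) <;> simp
    · rintro (rfl | rfl)
      · simp
      · simp [add_assoc, hkk]
  conv_rhs => rw [← ZMod.card n, ← card_univ]
  rw [hdiam, card_eq_sum_card_fiberwise fun a _ => mem_image_of_mem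
    (fun a : ZMod n => s(a, a + k)) (mem_univ a), sum_congr rfl hfibre, sum_const, smul_eq_mul,
    mul_comm]

theorem four_mul_card_fixedDissections (hn : 3 ≤ n) {k : ZMod n} (hk : k ≠ 0) (hkk : k + k = 0) :
    4 * (#(fixedDissections n k) : ℤ) = n * (n - 4) := by
  have hsplit := card_filter_add_card_filter_not (s := diagonals n) (fun p => p.map (· + k) = p)
  have hfixed := two_mul_card_filter_map_add_eq_self hn hk hkk
  have hmoved := two_mul_card_fixedDissections hk hkk
  have hdiag := two_mul_card_diagonals hn
  simp only [ne_eq] at hmoved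
  zify at hsplit hfixed hmoved
  linear_combination 2 * hmoved + 2 * hsplit - hfixed + hdiag

theorem sum_card_fixedDissections_of_odd (hn : Odd n) :
    ∑ k : ZMod n, #(fixedDissections n k) = #(twoDissections n) := by
  rw [Fintype.sum_eq_single 0 fun k hk => ?_, fixedDissections_zero]
  rw [fixedDissections_eq_empty hk fun hkk => ?_, card_empty]
  have := ZMod.val_add_val_of_add_self_eq_zero hk hkk
  exact Nat.not_even_iff_odd.2 hn ⟨_, this.symm⟩

theorem sum_card_fixedDissections_of_add_self_eq_zero {k : ZMod n} (hk : k ≠ 0)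
    (hkk : k + k = 0) :
    ∑ j : ZMod n, #(fixedDissections n j) = #(twoDissections n) + #(fixedDissections n k) := by
  rw [Fintype.sum_eq_add 0 k hk.symm fun j ⟨hj0, hjk⟩ => ?_, fixedDissections_zero]
  rw [fixedDissections_eq_empty hj0 fun hjj => hjk ?_, card_empty]
  -- both `j` and `k` have label `n / 2`
  have hj := ZMod.val_add_val_of_add_self_eq_zero hj0 hjj
  have hk := ZMod.val_add_val_of_add_self_eq_zero hk hkk
  exact ZMod.val_injective n (by omega)

end Polygon

/-- The number of 2-dissections of a convex `n`-gon modulo the cyclic action of `Z_n`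
is `(1/12)·n(n-2)(n-4)` for even `n ≥ 6` and `(1/12)·(n+1)(n-3)(n-4)` for odd `n ≥ 5`. -/
theorem two_dissections_mod_cyclic (n : ℕ) :
    (Even n → 6 ≤ n →
      12 * Nat.card (Quot fun (D E : {D : Finset (Sym2 (ZMod n)) // IsTwoDissection n D}) =>
          ∃ k : ZMod n, D.1.image (Sym2.map (· + k)) = E.1) = n * (n - 2) * (n - 4)) ∧
    (Odd n → 5 ≤ n →
      12 * Nat.card (Quot fun (D E : {D : Finset (Sym2 (ZMod n)) // IsTwoDissection n D}) =>
          ∃ k : ZMod n, D.1.image (Sym2.map (· + k)) = E.1) = (n + 1) * (n - 3) * (n - 4)) := by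
  refine ⟨fun he hn => ?_, fun ho hn => ?_⟩
  all_goals
    have : NeZero n := ⟨by omega⟩
    have hburnside := nat_card_quot_mul_eq_sum_card_fixedDissections (n := n)
    have hT := twelve_mul_card_twoDissections (n := n) (by omega)
    refine Nat.eq_of_mul_eq_mul_right (m := n) (by omega) ?_
  · obtain ⟨k, hk, hkk⟩ := ZMod.exists_ne_zero_add_self_eq_zero he
    rw [sum_card_fixedDissections_of_add_self_eq_zero hk hkk] at hburnside
    have hF := four_mul_card_fixedDissections (n := n) (by omega) hk hkk
    zify [show 2 ≤ n by omega, show 4 ≤ n by omega] at hburnside ⊢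
    linear_combination 12 * hburnside + hT + 3 * hF
  · rw [sum_card_fixedDissections_of_odd ho] at hburnside
    zify [show 3 ≤ n by omega, show 4 ≤ n by omega] at hburnside ⊢
    linear_combination 12 * hburnside + hT
end
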